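/- arXiv:2605.30091 — 2 statements merged into one kernel-verified Lean document; each statement's English description precedes it below -/
import Mathlib

section
/- If q ∈ B_TV(p,δ) minimizes E_q(f) over B_TV(p,δ) and, among such minimizers, maximizes q(x_1), where f(x_1) ≤ f(x_i) for all i, then q(x_1) ≥ p(x_1) and q(x_i) ≤ p(x_i) for all i ≥ 2. -/
/-!
If `q` put more mass than `p` on some `i ≠ x₀`, moving the excess `q i - p i` from `i` to `x₀`
would keep `q` a probability vector, not increase its total-variation distance to `p`, not
increase the expectation of `f` (as `f x₀` is minimal), and strictly increase the mass at `x₀`,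
contradicting the choice of `q`. Since `q` and `p` have the same total mass, `q x₀ ≥ p x₀` follows.
-/

open Finset

section

variable {ι : Type*} [DecidableEq ι]

def shiftMass (q : ι → ℝ) (a b : ι) (ε : ℝ) : ι → ℝ :=
  q + Pi.single a ε - Pi.single b ε

variable {q p : ι → ℝ} {a b i : ι} {ε : ℝ}

theorem shiftMass_apply_left (hab : a ≠ b) : shiftMass q a b ε a = q a + ε := by
  simp [shiftMass, hab]

theorem shiftMass_apply_right (hab : a ≠ b) : shiftMass q a b ε b = q b - ε := by
  simp [shiftMass, hab.symm]

theorem shiftMass_apply_of_ne (hia : i ≠ a) (hib : i ≠ b) : shiftMass q a b ε i = q i := by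
  simp [shiftMass, hia, hib]

theorem shiftMass_nonneg (hq : ∀ i, 0 ≤ q i) (hab : a ≠ b) (hε : 0 ≤ ε) (hεb : ε ≤ q b)
    (i : ι) : 0 ≤ shiftMass q a b ε i := by
  rcases eq_or_ne i a with rfl | hia
  · rw [shiftMass_apply_left hab]; linarith [hq i]
  rcases eq_or_ne i b with rfl | hib
  · rw [shiftMass_apply_right hab]; linarith
  · rw [shiftMass_apply_of_ne hia hib]; exact hq i

/-- `|q - p|` drops by exactly `ε` at `b` and grows by at most `ε` at `a`. -/
theorem abs_shiftMass_sub_le (hab : a ≠ b) (hε : 0 ≤ ε) (hεb : ε ≤ q b - p b) (i : ι) :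
    |shiftMass q a b ε i - p i| ≤ shiftMass (fun j => |q j - p j|) a b ε i := by
  rcases eq_or_ne i a with rfl | hia
  · rw [shiftMass_apply_left hab, shiftMass_apply_left hab, add_sub_right_comm]
    exact (abs_add_le _ _).trans_eq (by rw [abs_of_nonneg hε])
  rcases eq_or_ne i b with rfl | hib
  · rw [shiftMass_apply_right hab, shiftMass_apply_right hab, abs_of_nonneg (by linarith),
      abs_of_nonneg (by linarith)]
    exact le_of_eq (by ring)
  · rw [shiftMass_apply_of_ne hia hib, shiftMass_apply_of_ne hia hib]

variable [Fintype ι]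

theorem le_of_sum_eq_of_forall_ne_le (hsum : ∑ i, q i = ∑ i, p i)
    (hle : ∀ i, i ≠ a → q i ≤ p i) : p a ≤ q a := by
  have hrest : ∑ i ∈ univ.erase a, q i ≤ ∑ i ∈ univ.erase a, p i :=
    sum_le_sum fun i hi => hle i (ne_of_mem_erase hi)
  rw [← add_sum_erase _ _ (mem_univ a), ← add_sum_erase _ _ (mem_univ a)] at hsum
  linarith

theorem sum_shiftMass_mul (g : ι → ℝ) :
    ∑ i, shiftMass q a b ε i * g i = ∑ i, q i * g i + ε * (g a - g b) := by
  simp only [shiftMass, Pi.add_apply, Pi.sub_apply, add_mul, sub_mul, sum_add_distrib,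
    sum_sub_distrib, Pi.single_apply, ite_mul, zero_mul, sum_ite_eq', mem_univ, if_true]
  ring

theorem sum_shiftMass : ∑ i, shiftMass q a b ε i = ∑ i, q i := by
  simpa using sum_shiftMass_mul (q := q) (a := a) (b := b) (ε := ε) (fun _ => 1)

theorem sum_abs_shiftMass_sub_le (hab : a ≠ b) (hε : 0 ≤ ε) (hεb : ε ≤ q b - p b) :
    ∑ i, |shiftMass q a b ε i - p i| ≤ ∑ i, |q i - p i| :=
  (sum_le_sum fun i _ => abs_shiftMass_sub_le hab hε hεb i).trans_eq sum_shiftMass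

def tvBall (p : ι → ℝ) (δ : ℝ) : Set (ι → ℝ) :=
  {q | ((∀ i, 0 ≤ q i) ∧ ∑ i, q i = 1) ∧ (1 / 2) * ∑ i, |q i - p i| ≤ δ}

theorem shiftMass_mem_tvBall {δ : ℝ} (hq : q ∈ tvBall p δ) (hab : a ≠ b) (hpb : 0 ≤ p b)
    (hε : 0 ≤ ε) (hεb : ε ≤ q b - p b) : shiftMass q a b ε ∈ tvBall p δ := by
  obtain ⟨⟨hq0, hq1⟩, hqδ⟩ := hq
  refine ⟨⟨shiftMass_nonneg hq0 hab hε (by linarith), sum_shiftMass.trans hq1⟩, ?_⟩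
  linarith [sum_abs_shiftMass_sub_le hab hε hεb]

end

theorem tv_minimizer_structure_general
    (n : ℕ) (f p : Fin n → ℝ)
    (x₀ : Fin n) (hx₀ : ∀ i, f x₀ ≤ f i)
    (hp0 : ∀ i, 0 ≤ p i) (hp1 : ∑ i, p i = 1)
    (δ : ℝ)
    (B : Set (Fin n → ℝ))
    (hB : B = {q | ((∀ i, 0 ≤ q i) ∧ ∑ i, q i = 1) ∧
      (1 / 2) * ∑ i, |q i - p i| ≤ δ})
    (q : Fin n → ℝ) (hqB : q ∈ B)
    (hmin : ∀ q' ∈ B, ∑ i, q i * f i ≤ ∑ i, q' i * f i)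
    (hmax : ∀ q' ∈ B, (∑ i, q' i * f i) = (∑ i, q i * f i) → q' x₀ ≤ q x₀) :
    p x₀ ≤ q x₀ ∧ ∀ i, i ≠ x₀ → q i ≤ p i := by
  subst hB
  have hexcess : ∀ i, i ≠ x₀ → q i ≤ p i := by
    intro i hi
    by_contra! hgt
    have hq' : shiftMass q x₀ i (q i - p i) ∈ tvBall p δ :=
      shiftMass_mem_tvBall hqB hi.symm (hp0 i) (by linarith) le_rfl
    have hdrop : (q i - p i) * (f x₀ - f i) ≤ 0 :=
      mul_nonpos_of_nonneg_of_nonpos (by linarith) (by linarith [hx₀ i])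
    have hEq : ∑ j, shiftMass q x₀ i (q i - p i) j * f j = ∑ j, q j * f j :=
      le_antisymm (by linarith [sum_shiftMass_mul (q := q) (a := x₀) (b := i) (ε := q i - p i) f])
        (hmin _ hq')
    have hmass := hmax _ hq' hEq
    rw [shiftMass_apply_left hi.symm] at hmass
    linarith
  exact ⟨le_of_sum_eq_of_forall_ne_le (hqB.1.2.trans hp1.symm) hexcess, hexcess⟩

/-- If `q` minimizes the expectation of `f` over the TV ball and, among such
minimizers, maximizes `q x₀` (where `f x₀` is minimal), then `q x₀ ≥ p x₀` and
`q i ≤ p i` for all other `i`. -/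
theorem tv_minimizer_structure
    (n : ℕ) (f p : Fin n → ℝ)
    (x₀ : Fin n) (hx₀ : ∀ i, f x₀ ≤ f i)
    (hp0 : ∀ i, 0 ≤ p i) (hp1 : ∑ i, p i = 1)
    (δ : ℝ) (hδ0 : 0 ≤ δ) (hδ1 : δ ≤ 1)
    (B : Set (Fin n → ℝ))
    (hB : B = {q | ((∀ i, 0 ≤ q i) ∧ ∑ i, q i = 1) ∧
      (1 / 2) * ∑ i, |q i - p i| ≤ δ})
    (q : Fin n → ℝ) (hqB : q ∈ B)
    (hmin : ∀ q' ∈ B, ∑ i, q i * f i ≤ ∑ i, q' i * f i)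
    (hmax : ∀ q' ∈ B, (∑ i, q' i * f i) = (∑ i, q i * f i) → q' x₀ ≤ q x₀) :
    p x₀ ≤ q x₀ ∧ ∀ i, i ≠ x₀ → q i ≤ p i :=
  tv_minimizer_structure_general n f p x₀ hx₀ hp0 hp1 δ B hB q hqB hmin hmax
end

section
/- Let r ∈ {ℓ,...,n} be the largest index with δ_r > δ (with δ_ℓ := +∞). Then min_{q ∈ B_{χ²}(p,δ)} E_q(f) equals μ_r - σ_r·√(m_r·δ - (1-m_r)) if r > ℓ, and equals f(x_1) if r = ℓ. -/
/-!
The minimiser is a linear tilt of `p` cut off after a prefix `{x_1, …, x_r}`: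
`q_i ∝ p_i (1 - t (f(x_i) - μ_r))` for `i ≤ r` and `q_i = 0` beyond, with `t` chosen so that the
χ²-constraint is active. Its optimality is weak duality: if `f_i + κ (q_i - p_i) / p_i ≥ c` for
all `i`, then by AM-GM every `q'` in the ball has `E_{q'} f ≥ c - κ δ`, and the tilt attains this
bound with `κ = m_r / t`. The tilt is a distribution and the certificate holds as soon as
`t (f(x_i) - μ_r)` is `≤ 1` on the prefix and `≥ 1` beyond it. This is what `δ_r > δ ≥ δ_{r+1}`
says, because `δ_k = ∑_{i ≤ k} p_i (f_k - f_i)² / (∑_{i ≤ k} p_i (f_k - f_i))² - 1` does not see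
its `k`-th term, so `δ_{r+1}` is computed from the same prefix statistics as `δ_r`.
For `r = ℓ` the tilt is flat and puts all its mass on the minimisers of `f`.
-/

open Finset

noncomputable section

section WeightedMoments

variable {ι : Type*} (p f : ι → ℝ) (s : Finset ι)

def weightedMean : ℝ := (1 / ∑ i ∈ s, p i) * ∑ i ∈ s, p i * f i

def weightedVar : ℝ := (1 / ∑ i ∈ s, p i) * ∑ i ∈ s, p i * (f i - weightedMean p f s) ^ 2

/-- `critRadius p f (Iic k) (f k)` is the threshold `δ_k`. -/
def critRadius (a : ℝ) : ℝ :=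
  (1 / ∑ i ∈ s, p i) * (weightedVar p f s / (a - weightedMean p f s) ^ 2 + 1 - ∑ i ∈ s, p i)

variable {p f s}

theorem sum_mul_moments (hM : ∑ i ∈ s, p i ≠ 0) (a b c : ℝ) :
    ∑ i ∈ s, p i * (a + b * (f i - weightedMean p f s) + c * (f i - weightedMean p f s) ^ 2) =
      (∑ i ∈ s, p i) * (a + c * weightedVar p f s) := by
  have h1 : ∑ i ∈ s, p i * f i = (∑ i ∈ s, p i) * weightedMean p f s := by
    rw [weightedMean]; field_simp
  have h2 : ∑ i ∈ s, p i * (f i - weightedMean p f s) ^ 2 =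
      (∑ i ∈ s, p i) * weightedVar p f s := by
    rw [weightedVar]; field_simp
  simp only [mul_add, mul_sub, sum_add_distrib, sum_sub_distrib]
  simp only [mul_left_comm (p _) b, mul_left_comm (p _) c, ← mul_sum, ← sum_mul, h1, h2]
  ring

theorem sum_mul_sub_eq (hM : ∑ i ∈ s, p i ≠ 0) (a : ℝ) :
    ∑ i ∈ s, p i * (a - f i) = (∑ i ∈ s, p i) * (a - weightedMean p f s) := by
  calc ∑ i ∈ s, p i * (a - f i)
      = ∑ i ∈ s, p i * ((a - weightedMean p f s) + -1 * (f i - weightedMean p f s)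
          + 0 * (f i - weightedMean p f s) ^ 2) := sum_congr rfl fun i _ => by ring
    _ = _ := by rw [sum_mul_moments hM]; ring

theorem sum_mul_sub_sq_eq (hM : ∑ i ∈ s, p i ≠ 0) (a : ℝ) :
    ∑ i ∈ s, p i * (a - f i) ^ 2 =
      (∑ i ∈ s, p i) * (weightedVar p f s + (a - weightedMean p f s) ^ 2) := by
  calc ∑ i ∈ s, p i * (a - f i) ^ 2
      = ∑ i ∈ s, p i * ((a - weightedMean p f s) ^ 2
          + -2 * (a - weightedMean p f s) * (f i - weightedMean p f s)
          + 1 * (f i - weightedMean p f s) ^ 2) := sum_congr rfl fun i _ => by ring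
    _ = _ := by rw [sum_mul_moments hM]; ring

theorem weightedMean_lt (hp : ∀ i ∈ s, 0 < p i) {a : ℝ} (hle : ∀ i ∈ s, f i ≤ a)
    (hlt : ∃ i ∈ s, f i < a) : weightedMean p f s < a := by
  obtain ⟨j, hj, hfj⟩ := hlt
  have hM : 0 < ∑ i ∈ s, p i := sum_pos hp ⟨j, hj⟩
  have : 0 < ∑ i ∈ s, p i * (a - f i) :=
    sum_pos' (fun i hi => mul_nonneg (hp i hi).le (sub_nonneg.2 (hle i hi)))
      ⟨j, hj, mul_pos (hp j hj) (sub_pos.2 hfj)⟩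
  rw [sum_mul_sub_eq hM.ne'] at this
  exact sub_pos.1 (pos_of_mul_pos_right this hM.le)

theorem weightedMean_eq_of_forall_eq (hM : ∑ i ∈ s, p i ≠ 0) {c : ℝ}
    (hf : ∀ i ∈ s, f i = c) :
    weightedMean p f s = c := by
  have h : ∑ i ∈ s, p i * f i = (∑ i ∈ s, p i) * c := by
    rw [sum_mul]; exact sum_congr rfl fun i hi => by rw [hf i hi]
  rw [weightedMean, h]
  field_simp

theorem weightedVar_pos (hp : ∀ i ∈ s, 0 < p i) {j : ι} (hj : j ∈ s)
    (hfj : f j ≠ weightedMean p f s) :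
    0 < weightedVar p f s := by
  have hM : 0 < ∑ i ∈ s, p i := sum_pos hp ⟨j, hj⟩
  have : 0 < ∑ i ∈ s, p i * (f i - weightedMean p f s) ^ 2 :=
    sum_pos' (fun i hi => mul_nonneg (hp i hi).le (sq_nonneg _))
      ⟨j, hj, mul_pos (hp j hj) (pow_two_pos_of_ne_zero (sub_ne_zero.2 hfj))⟩
  exact mul_pos (one_div_pos.2 hM) this

theorem weightedVar_nonneg (hp : ∀ i ∈ s, 0 ≤ p i) : 0 ≤ weightedVar p f s :=
  mul_nonneg (one_div_nonneg.2 (sum_nonneg hp))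
    (sum_nonneg fun i hi => mul_nonneg (hp i hi) (sq_nonneg _))

theorem critRadius_eq (hM : ∑ i ∈ s, p i ≠ 0) {a : ℝ} (ha : a ≠ weightedMean p f s) :
    critRadius p f s a =
      (∑ i ∈ s, p i * (a - f i) ^ 2) / (∑ i ∈ s, p i * (a - f i)) ^ 2 - 1 := by
  have hd : a - weightedMean p f s ≠ 0 := sub_ne_zero.2 ha
  rw [critRadius, sum_mul_sub_eq hM, sum_mul_sub_sq_eq hM]
  field_simp

theorem critRadius_insert_self [DecidableEq ι] (hM : 0 < ∑ i ∈ s, p i) {k : ι}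
    (hk : 0 ≤ p k) (hfk : f k ≠ weightedMean p f s) :
    critRadius p f (insert k s) (f k) = critRadius p f s (f k) := by
  by_cases hks : k ∈ s
  · rw [insert_eq_of_mem hks]
  have hM' : 0 < ∑ i ∈ insert k s, p i := by rw [sum_insert hks]; positivity
  have hA : ∑ i ∈ insert k s, p i * (f k - f i) = ∑ i ∈ s, p i * (f k - f i) :=
    sum_insert_zero (by simp)
  have hQ : ∑ i ∈ insert k s, p i * (f k - f i) ^ 2 = ∑ i ∈ s, p i * (f k - f i) ^ 2 :=
    sum_insert_zero (by simp)
  have hfk' : f k ≠ weightedMean p f (insert k s) := by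
    intro h
    have := sum_mul_sub_eq (f := f) hM'.ne' (f k)
    rw [← h, sub_self, mul_zero, hA, sum_mul_sub_eq hM.ne'] at this
    exact hfk (sub_eq_zero.1 ((mul_eq_zero.1 this).resolve_left hM.ne'))
  rw [critRadius_eq hM'.ne' hfk', critRadius_eq hM.ne' hfk, hA, hQ]

theorem critRadius_le_iff (hM : 0 < ∑ i ∈ s, p i) {a δ : ℝ} (ha : a ≠ weightedMean p f s) :
    critRadius p f s a ≤ δ ↔
      weightedVar p f s ≤
        ((∑ i ∈ s, p i) * δ - (1 - ∑ i ∈ s, p i)) * (a - weightedMean p f s) ^ 2 := by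
  have hd : 0 < (a - weightedMean p f s) ^ 2 := pow_two_pos_of_ne_zero (sub_ne_zero.2 ha)
  rw [critRadius, one_div, inv_mul_le_iff₀ hM, ← div_le_iff₀ hd]
  constructor <;> intro h <;> linarith

theorem critRadius_le_iff_one_le_mul (hM : 0 < ∑ i ∈ s, p i) (hσ : 0 < weightedVar p f s)
    {a δ t : ℝ} (ha : weightedMean p f s < a) (ht : 0 ≤ t)
    (htσ : t ^ 2 * weightedVar p f s = (∑ i ∈ s, p i) * δ - (1 - ∑ i ∈ s, p i)) :
    critRadius p f s a ≤ δ ↔ 1 ≤ t * (a - weightedMean p f s) := by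
  have htd : 0 ≤ t * (a - weightedMean p f s) := mul_nonneg ht (sub_pos.2 ha).le
  rw [critRadius_le_iff hM ha.ne', ← htσ,
    show t ^ 2 * weightedVar p f s * (a - weightedMean p f s) ^ 2 =
      (t * (a - weightedMean p f s)) ^ 2 * weightedVar p f s by ring,
    le_mul_iff_one_le_left hσ, one_le_sq_iff_one_le_abs, abs_of_nonneg htd]

theorem nonneg_of_critRadius_le (hp : ∀ i ∈ s, 0 ≤ p i) (hM : 0 < ∑ i ∈ s, p i)
    {a δ : ℝ} (ha : a ≠ weightedMean p f s) (h : critRadius p f s a ≤ δ) :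
    0 ≤ (∑ i ∈ s, p i) * δ - (1 - ∑ i ∈ s, p i) :=
  nonneg_of_mul_nonneg_left ((weightedVar_nonneg hp).trans ((critRadius_le_iff hM ha).1 h))
    (pow_two_pos_of_ne_zero (sub_ne_zero.2 ha))

end WeightedMoments

section ChiSquareBall

variable {ι : Type*} [Fintype ι] {p f : ι → ℝ} {δ : ℝ}

variable (p) in
def chiSqBall (δ : ℝ) : Set (ι → ℝ) :=
  {q | ((∀ i, 0 ≤ q i) ∧ ∑ i, q i = 1) ∧ ∑ i, (q i - p i) ^ 2 / p i ≤ δ}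

theorem eq_of_mem_chiSqBall_of_nonpos (hp : ∀ i, 0 < p i) {q : ι → ℝ}
    (hq : q ∈ chiSqBall p δ) (hδ : δ ≤ 0) : q = p := by
  have hterm : ∀ i ∈ univ, 0 ≤ (q i - p i) ^ 2 / p i := fun i _ => by
    have := hp i; positivity
  have hzero := (sum_eq_zero_iff_of_nonneg hterm).1
    (le_antisymm (hq.2.trans hδ) (sum_nonneg hterm))
  funext i
  have := hzero i (mem_univ i)
  rw [div_eq_zero_iff, or_iff_left (hp i).ne', sq_eq_zero_iff, sub_eq_zero] at this
  exact this

theorem sum_mul_div_le (hp : ∀ i, 0 < p i) (q s : ι → ℝ) :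
    ∑ i, (q i - p i) * (s i - p i) / p i ≤
      (∑ i, (q i - p i) ^ 2 / p i + ∑ i, (s i - p i) ^ 2 / p i) / 2 := by
  rw [← sum_add_distrib, sum_div]
  refine sum_le_sum fun i _ => ?_
  have hpi := hp i
  have : ((q i - p i) ^ 2 / p i + (s i - p i) ^ 2 / p i) / 2 - (q i - p i) * (s i - p i) / p i
      = (q i - s i) ^ 2 / (2 * p i) := by
    field_simp; ring
  have : 0 ≤ (q i - s i) ^ 2 / (2 * p i) := by positivity
  linarith

theorem le_expectation_of_certificate (hp : ∀ i, 0 < p i) (hp1 : ∑ i, p i = 1)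
    {q s : ι → ℝ} (hq : q ∈ chiSqBall p δ) (hs : s ∈ chiSqBall p δ) {κ c : ℝ}
    (hκ : 0 ≤ κ) (hcert : ∀ i, c ≤ f i + κ * ((s i - p i) / p i)) :
    c - κ * δ ≤ ∑ i, q i * f i := by
  obtain ⟨⟨hq0, hq1⟩, hqδ⟩ := hq
  obtain ⟨⟨-, hs1⟩, hsδ⟩ := hs
  have hcentred : ∑ i, q i * ((s i - p i) / p i) = ∑ i, (q i - p i) * (s i - p i) / p i := by
    have : ∑ i, p i * ((s i - p i) / p i) = 0 := by
      rw [sum_congr rfl fun i _ => mul_div_cancel₀ (s i - p i) (hp i).ne', sum_sub_distrib,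
        hs1, hp1, sub_self]
    rw [← sub_eq_zero, ← this, ← sum_sub_distrib]
    exact sum_congr rfl fun i _ => by ring
  have hinner : ∑ i, q i * ((s i - p i) / p i) ≤ δ := by
    rw [hcentred]; linarith [sum_mul_div_le hp q s]
  calc c - κ * δ ≤ c - κ * ∑ i, q i * ((s i - p i) / p i) := by gcongr
    _ = ∑ i, q i * (c - κ * ((s i - p i) / p i)) := by
      simp only [mul_sub, sum_sub_distrib, ← sum_mul, hq1, one_mul, mul_sum]
      exact congrArg _ (sum_congr rfl fun i _ => by ring)
    _ ≤ ∑ i, q i * f i :=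
      sum_le_sum fun i _ => mul_le_mul_of_nonneg_left (by linarith [hcert i]) (hq0 i)

end ChiSquareBall

section LinearTilt

variable {ι : Type*} [Fintype ι] [DecidableEq ι] {p f : ι → ℝ} {s : Finset ι} {δ t : ℝ}

variable (p f s t) in
def linearTilt (i : ι) : ℝ :=
  if i ∈ s then p i / (∑ j ∈ s, p j) * (1 - t * (f i - weightedMean p f s)) else 0

theorem sum_linearTilt_mul (g : ι → ℝ) :
    ∑ i, linearTilt p f s t i * g i =
      (∑ i ∈ s, p i * (1 - t * (f i - weightedMean p f s)) * g i) / ∑ i ∈ s, p i := by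
  simp only [linearTilt, ite_mul, zero_mul, sum_ite_mem, univ_inter, sum_div]
  exact sum_congr rfl fun i _ => by ring

theorem sum_linearTilt (hM : ∑ i ∈ s, p i ≠ 0) : ∑ i, linearTilt p f s t i = 1 := by
  have := sum_linearTilt_mul (p := p) (f := f) (s := s) (t := t) 1
  simp only [Pi.one_apply, mul_one] at this
  rw [this, div_eq_one_iff_eq hM]
  calc ∑ i ∈ s, p i * (1 - t * (f i - weightedMean p f s))
      = ∑ i ∈ s, p i * (1 + -t * (f i - weightedMean p f s)
          + 0 * (f i - weightedMean p f s) ^ 2) :=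
        sum_congr rfl fun i _ => by ring
    _ = _ := by rw [sum_mul_moments hM]; ring

theorem expectation_linearTilt (hM : ∑ i ∈ s, p i ≠ 0) :
    ∑ i, linearTilt p f s t i * f i = weightedMean p f s - t * weightedVar p f s := by
  rw [sum_linearTilt_mul, div_eq_iff hM]
  calc ∑ i ∈ s, p i * (1 - t * (f i - weightedMean p f s)) * f i
      = ∑ i ∈ s, p i * (weightedMean p f s
          + (1 - t * weightedMean p f s) * (f i - weightedMean p f s)
          + -t * (f i - weightedMean p f s) ^ 2) := sum_congr rfl fun i _ => by ring
    _ = _ := by rw [sum_mul_moments hM]; ring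

theorem chiSq_linearTilt (hp : ∀ i, p i ≠ 0) (hp1 : ∑ i, p i = 1)
    (hM : ∑ i ∈ s, p i ≠ 0) :
    ∑ i, (linearTilt p f s t i - p i) ^ 2 / p i =
      (1 - ∑ i ∈ s, p i + t ^ 2 * weightedVar p f s) / ∑ i ∈ s, p i := by
  have hin : ∑ i ∈ s, (linearTilt p f s t i - p i) ^ 2 / p i =
      ((1 - ∑ i ∈ s, p i) ^ 2 + t ^ 2 * weightedVar p f s) / ∑ i ∈ s, p i := by
    calc ∑ i ∈ s, (linearTilt p f s t i - p i) ^ 2 / p i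
        = ∑ i ∈ s, p i * ((1 - ∑ i ∈ s, p i) ^ 2
            + -2 * (1 - ∑ i ∈ s, p i) * t * (f i - weightedMean p f s)
            + t ^ 2 * (f i - weightedMean p f s) ^ 2) / (∑ i ∈ s, p i) ^ 2 :=
          sum_congr rfl fun i hi => by
            rw [linearTilt, if_pos hi]; field_simp [hp i]; ring
      _ = _ := by rw [← sum_div, sum_mul_moments hM]; field_simp
  have hout : ∑ i ∈ sᶜ, (linearTilt p f s t i - p i) ^ 2 / p i = 1 - ∑ i ∈ s, p i := by
    rw [eq_sub_iff_add_eq', ← hp1, ← sum_add_sum_compl s]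
    refine congrArg _ (sum_congr rfl fun i hi => ?_)
    rw [linearTilt, if_neg (mem_compl.1 hi)]
    field_simp [hp i]
    ring
  rw [← sum_add_sum_compl s, hin, hout]
  field_simp
  ring

theorem linearTilt_mem_chiSqBall (hp : ∀ i, 0 < p i) (hp1 : ∑ i, p i = 1)
    (hM : 0 < ∑ i ∈ s, p i) (hin : ∀ i ∈ s, t * (f i - weightedMean p f s) ≤ 1)
    (hδ : 1 - ∑ i ∈ s, p i + t ^ 2 * weightedVar p f s ≤ (∑ i ∈ s, p i) * δ) :
    linearTilt p f s t ∈ chiSqBall p δ := by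
  refine ⟨⟨fun i => ?_, sum_linearTilt hM.ne'⟩, ?_⟩
  · unfold linearTilt
    split_ifs with hi
    · exact mul_nonneg (div_nonneg (hp i).le hM.le) (sub_nonneg.2 (hin i hi))
    · exact le_rfl
  · rw [chiSq_linearTilt (fun i => (hp i).ne') hp1 hM.ne', div_le_iff₀ hM]
    linarith

theorem isLeast_expectation_of_flat (hp : ∀ i, 0 < p i) (hp1 : ∑ i, p i = 1)
    (hM : 0 < ∑ i ∈ s, p i) {c : ℝ} (hmin : ∀ i, c ≤ f i) (hs : ∀ i ∈ s, f i = c)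
    (hδ : 1 - ∑ i ∈ s, p i ≤ (∑ i ∈ s, p i) * δ) :
    IsLeast ((fun q => ∑ i, q i * f i) '' chiSqBall p δ) c := by
  refine ⟨⟨linearTilt p f s 0,
    linearTilt_mem_chiSqBall hp hp1 hM (by simp) (by linarith), ?_⟩, ?_⟩
  · exact (expectation_linearTilt hM.ne').trans (by
      rw [weightedMean_eq_of_forall_eq hM.ne' hs, zero_mul, sub_zero])
  · rintro _ ⟨q, ⟨⟨hq0, hq1⟩, -⟩, rfl⟩
    calc c = ∑ i, q i * c := by rw [← sum_mul, hq1, one_mul]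
      _ ≤ ∑ i, q i * f i := sum_le_sum fun i _ => mul_le_mul_of_nonneg_left (hmin i) (hq0 i)

theorem isLeast_expectation_of_threshold (hp : ∀ i, 0 < p i) (hp1 : ∑ i, p i = 1)
    (hM : 0 < ∑ i ∈ s, p i) (ht : 0 ≤ t)
    (htσ : t ^ 2 * weightedVar p f s = (∑ i ∈ s, p i) * δ - (1 - ∑ i ∈ s, p i))
    (hin : ∀ i ∈ s, t * (f i - weightedMean p f s) ≤ 1)
    (hout : ∀ i ∉ s, 1 ≤ t * (f i - weightedMean p f s)) :
    IsLeast ((fun q => ∑ i, q i * f i) '' chiSqBall p δ)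
      (weightedMean p f s - t * weightedVar p f s) := by
  have hmem := linearTilt_mem_chiSqBall hp hp1 hM hin (δ := δ) (by linarith)
  refine ⟨⟨_, hmem, expectation_linearTilt hM.ne'⟩, ?_⟩
  rintro _ ⟨q, hq, rfl⟩
  rcases ht.eq_or_lt with rfl | htpos
  · -- with `t = 0` nothing lies outside `s`, so `δ = 0` and the ball is `{p}`
    have hs : s = univ := eq_univ_iff_forall.2 fun i => by_contra fun hi => by
      linarith [hout i hi]
    subst hs
    have hδ : δ ≤ 0 := by rw [hp1] at htσ; linarith
    rw [← expectation_linearTilt hM.ne', eq_of_mem_chiSqBall_of_nonpos hp hq hδ,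
      eq_of_mem_chiSqBall_of_nonpos hp hmem hδ]
  · have hval : weightedMean p f s - t * weightedVar p f s =
        weightedMean p f s + (1 - ∑ i ∈ s, p i) / t - (∑ i ∈ s, p i) / t * δ := by
      field_simp
      linarith
    rw [hval]
    -- with multiplier `(∑ i ∈ s, p i) / t` the certificate is an equality on `s`;
    -- off `s` it is `hout`
    refine le_expectation_of_certificate hp hp1 hq hmem (by positivity) fun i => ?_
    by_cases hi : i ∈ s
    · rw [linearTilt, if_pos hi]
      refine le_of_eq ?_
      field_simp [(hp i).ne']
      ring
    · rw [linearTilt, if_neg hi, zero_sub, neg_div, div_self (hp i).ne', sub_div, mul_neg_one,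
        ← sub_eq_add_neg]
      have : 1 / t ≤ f i - weightedMean p f s := by
        rw [div_le_iff₀ htpos]; linarith [hout i hi]
      linarith

end LinearTilt

section Prefix

variable {ι : Type*} [LinearOrder ι] [LocallyFiniteOrderBot ι] {p f : ι → ℝ} {δ : ℝ}

theorem sum_Iic_of_isMax [Fintype ι] {a : ι} (ha : IsMax a) :
    ∑ i ∈ Iic a, p i = ∑ i, p i := by
  congr 1
  exact eq_univ_iff_forall.2 fun i => mem_Iic.2 (ha.isTop i)

variable [SuccOrder ι]

theorem critRadius_Iic_succ (hp : ∀ i, 0 < p i) (a : ι)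
    (ha : f (Order.succ a) ≠ weightedMean p f (Iic a)) :
    critRadius p f (Iic (Order.succ a)) (f (Order.succ a)) =
      critRadius p f (Iic a) (f (Order.succ a)) := by
  have : Iic (Order.succ a) = insert (Order.succ a) (Iic a) := by
    ext; simp [Order.le_succ_iff_eq_or_le]
  rw [this]
  exact critRadius_insert_self (sum_pos (fun i _ => hp i) ⟨a, mem_Iic.2 le_rfl⟩) (hp _).le ha

variable [Fintype ι]

theorem nonneg_of_critRadius_succ_le (hp : ∀ i, 0 < p i) (hp1 : ∑ i, p i = 1) (hδ : 0 ≤ δ)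
    {a : ι} (ha : ¬IsMax a → f (Order.succ a) ≠ weightedMean p f (Iic a))
    (hsucc : ¬IsMax a → critRadius p f (Iic (Order.succ a)) (f (Order.succ a)) ≤ δ) :
    0 ≤ (∑ i ∈ Iic a, p i) * δ - (1 - ∑ i ∈ Iic a, p i) := by
  by_cases hmax : IsMax a
  · rw [sum_Iic_of_isMax hmax, hp1]; linarith
  have h := hsucc hmax
  rw [critRadius_Iic_succ hp a (ha hmax)] at h
  exact nonneg_of_critRadius_le (fun i _ => (hp i).le)
    (sum_pos (fun i _ => hp i) ⟨a, mem_Iic.2 le_rfl⟩) (ha hmax) h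

theorem isLeast_expectation_min_of_critRadius_succ_le (hp : ∀ i, 0 < p i)
    (hp1 : ∑ i, p i = 1) (hf : Monotone f) (hδ : 0 ≤ δ) {b ℓ : ι} (hb : ∀ i, b ≤ i)
    (hℓ : f ℓ = f b) (hℓmax : ∀ i, f i = f b → i ≤ ℓ)
    (hsucc : ¬IsMax ℓ → critRadius p f (Iic (Order.succ ℓ)) (f (Order.succ ℓ)) ≤ δ) :
    IsLeast ((fun q => ∑ i, q i * f i) '' chiSqBall p δ) (f b) := by
  have hconst : ∀ i ∈ Iic ℓ, f i = f b := fun i hi =>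
    le_antisymm (hℓ ▸ hf (mem_Iic.1 hi)) (hf (hb i))
  have hM : 0 < ∑ i ∈ Iic ℓ, p i := sum_pos (fun i _ => hp i) ⟨ℓ, mem_Iic.2 le_rfl⟩
  refine isLeast_expectation_of_flat hp hp1 hM (fun i => hf (hb i)) hconst ?_
  have hk : ¬IsMax ℓ → f (Order.succ ℓ) ≠ weightedMean p f (Iic ℓ) := fun hmax h =>
    (Order.lt_succ_of_not_isMax hmax).not_ge
      (hℓmax _ (h.trans (weightedMean_eq_of_forall_eq hM.ne' hconst)))
  linarith [nonneg_of_critRadius_succ_le hp hp1 hδ hk hsucc]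

theorem isLeast_expectation_of_critRadius_lt (hp : ∀ i, 0 < p i) (hp1 : ∑ i, p i = 1)
    (hf : Monotone f) (hδ : 0 ≤ δ) {b r : ι} (hbr : b ≤ r) (hfbr : f b < f r)
    (hr : δ < critRadius p f (Iic r) (f r))
    (hsucc : ¬IsMax r → critRadius p f (Iic (Order.succ r)) (f (Order.succ r)) ≤ δ) :
    IsLeast ((fun q => ∑ i, q i * f i) '' chiSqBall p δ)
      (weightedMean p f (Iic r) - √(weightedVar p f (Iic r)) *
        √((∑ i ∈ Iic r, p i) * δ - (1 - ∑ i ∈ Iic r, p i))) := by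
  set M := ∑ i ∈ Iic r, p i
  set μ := weightedMean p f (Iic r)
  set σ2 := weightedVar p f (Iic r)
  have hM : 0 < M := sum_pos (fun i _ => hp i) ⟨r, mem_Iic.2 le_rfl⟩
  have hμ : μ < f r :=
    weightedMean_lt (fun i _ => hp i) (fun i hi => hf (mem_Iic.1 hi)) ⟨b, mem_Iic.2 hbr, hfbr⟩
  have hσ : 0 < σ2 := weightedVar_pos (fun i _ => hp i) (mem_Iic.2 le_rfl) hμ.ne'
  have hμle : ∀ i, r ≤ i → μ < f i := fun i hi => hμ.trans_le (hf hi)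
  have hT : 0 ≤ M * δ - (1 - M) := nonneg_of_critRadius_succ_le hp hp1 hδ
    (fun _ => (hμle _ (Order.le_succ r)).ne') hsucc
  set t := √(M * δ - (1 - M)) / √σ2
  have ht : 0 ≤ t := by positivity
  have htσ : t ^ 2 * σ2 = M * δ - (1 - M) := by
    rw [div_pow, Real.sq_sqrt hT, Real.sq_sqrt hσ.le]; field_simp
  have hval : t * σ2 = √σ2 * √(M * δ - (1 - M)) := by
    rw [div_mul_eq_mul_div, mul_div_assoc, Real.div_sqrt, mul_comm]
  have hcrit : ∀ i, r ≤ i → (critRadius p f (Iic r) (f i) ≤ δ ↔ 1 ≤ t * (f i - μ)) :=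
    fun i hi => critRadius_le_iff_one_le_mul hM hσ (hμle i hi) ht htσ
  rw [← hval]
  refine isLeast_expectation_of_threshold hp hp1 hM ht htσ (fun i hi => ?_) (fun i hi => ?_)
  · calc t * (f i - μ) ≤ t * (f r - μ) := by gcongr; exact hf (mem_Iic.1 hi)
      _ ≤ 1 := (not_le.1 ((hcrit r le_rfl).not.1 hr.not_ge)).le
  · have hri : r < i := by simpa using hi
    have hmax : ¬IsMax r := not_isMax_of_lt hri
    calc 1 ≤ t * (f (Order.succ r) - μ) := (hcrit _ (Order.le_succ r)).1 (by
          rw [← critRadius_Iic_succ hp r (hμle _ (Order.le_succ r)).ne']; exact hsucc hmax)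
      _ ≤ t * (f i - μ) := by gcongr; exact hf (Order.succ_le_of_lt hri)

end Prefix

end

/-- Closed form for the lower expectation over the χ²-divergence ball: with `r`
the largest index in `{ℓ,...,n}` such that `δ_r > δ` (where `δ_ℓ = +∞`), the
minimum equals `μ_r - σ_r·√(m_r·δ - (1-m_r))` if `r > ℓ`, and `f(x_1)` if `r = ℓ`. -/
theorem chi2_lower_expectation
    (n : ℕ) (hn : 0 < n) (f p : Fin n → ℝ) (hf : Monotone f)
    (hp0 : ∀ i, 0 < p i) (hp1 : ∑ i, p i = 1)
    (δ : ℝ) (hδ : 0 ≤ δ)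
    (ℓ : Fin n) (hℓ : f ℓ = f ⟨0, hn⟩)
    (hℓmax : ∀ i, f i = f ⟨0, hn⟩ → i ≤ ℓ)
    (m μ σ2 δc : Fin n → ℝ)
    (hm : m = fun j => ∑ i ∈ Finset.Iic j, p i)
    (hμ : μ = fun j => (1 / m j) * ∑ i ∈ Finset.Iic j, p i * f i)
    (hσ2 : σ2 = fun j => (1 / m j) * ∑ i ∈ Finset.Iic j, p i * (f i - μ j) ^ 2)
    (hδc : δc = fun j => (1 / m j) * (σ2 j / (f j - μ j) ^ 2 + 1 - m j))
    (r : Fin n) (hrℓ : ℓ ≤ r)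
    (hr1 : ℓ < r → δ < δc r)
    (hr2 : ∀ k : Fin n, r < k → δc k ≤ δ) :
    let B : Set (Fin n → ℝ) :=
      {q | ((∀ i, 0 ≤ q i) ∧ ∑ i, q i = 1) ∧ ∑ i, (q i - p i) ^ 2 / p i ≤ δ}
    IsLeast ((fun q : Fin n → ℝ => ∑ i, q i * f i) '' B)
      (if r = ℓ then f ⟨0, hn⟩
       else μ r - Real.sqrt (σ2 r) * Real.sqrt (m r * δ - (1 - m r))) := by
  intro B
  subst hm hμ hσ2 hδc
  have hb : ∀ i : Fin n, ⟨0, hn⟩ ≤ i := fun i => Fin.le_def.2 (Nat.zero_le i)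
  have hsucc : ¬IsMax r → _ := fun h => hr2 _ (Order.lt_succ_of_not_isMax h)
  split_ifs with hrℓ'
  · subst hrℓ'
    exact isLeast_expectation_min_of_critRadius_succ_le hp0 hp1 hf hδ hb hℓ hℓmax hsucc
  · have hlr : ℓ < r := lt_of_le_of_ne hrℓ (Ne.symm hrℓ')
    have hfr : f ⟨0, hn⟩ < f r := (hf (hb r)).lt_of_ne fun h => (hℓmax r h.symm).not_gt hlr
    exact isLeast_expectation_of_critRadius_lt hp0 hp1 hf hδ (hb r) hfr (hr1 hlr) hsucc
end
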